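/- Let k, n, m, f, d₁, d₂ be natural numbers with k ∈ {3, 4, 5}, n ≥ 4, d₁ ≥ 3, d₂ ≥ 3, and suppose k·n = 2·m, f − 1 = m − n + 1, and 2·m = d₁·(f − 1) + d₂. Then d₁·(k − 2) < 2·k; consequently, if k = 3 then 3 ≤ d₁ ≤ 5, and if k ∈ {4, 5} then d₁ = 3. -/

import Mathlib

/-!
Eliminating `m` and `f` from the three counting relations gives
`n · (2k − d₁(k − 2)) = 2(d₁ + d₂)`. The right-hand side is positive and `n ≥ 0`, so
`2k − d₁(k − 2) > 0`, which for `k = 3, 4, 5` reads `d₁ < 6, 4, 10/3` respectively.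
-/

theorem counting_identity {k n m f d₁ d₂ : ℤ} (h1 : k * n = 2 * m)
    (h2 : f - 1 = m - n + 1) (h3 : 2 * m = d₁ * (f - 1) + d₂) :
    n * (2 * k - d₁ * (k - 2)) = 2 * (d₁ + d₂) := by
  linear_combination 2 * h3 + 2 * d₁ * h2 + (2 - d₁) * h1

theorem mul_sub_two_lt_of_counting {k n m f d₁ d₂ : ℤ} (hn : 0 ≤ n) (hd : 0 < d₁ + d₂)
    (h1 : k * n = 2 * m) (h2 : f - 1 = m - n + 1) (h3 : 2 * m = d₁ * (f - 1) + d₂) :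
    d₁ * (k - 2) < 2 * k := by
  have hprod : 0 < n * (2 * k - d₁ * (k - 2)) := by
    rw [counting_identity h1 h2 h3]
    omega
  linarith [pos_of_mul_pos_right hprod hn]

theorem stmt_6_general (k n m f d₁ d₂ : ℕ)
    (hd₁ : 3 ≤ d₁)
    (h1 : (k : ℤ) * n = 2 * (m : ℤ))
    (h2 : (f : ℤ) - 1 = (m : ℤ) - (n : ℤ) + 1)
    (h3 : 2 * (m : ℤ) = (d₁ : ℤ) * ((f : ℤ) - 1) + (d₂ : ℤ)) :
    (d₁ : ℤ) * ((k : ℤ) - 2) < 2 * (k : ℤ) ∧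
      (k = 3 → 3 ≤ d₁ ∧ d₁ ≤ 5) ∧ ((k = 4 ∨ k = 5) → d₁ = 3) := by
  have hbound := mul_sub_two_lt_of_counting (by positivity) (by omega) h1 h2 h3
  refine ⟨hbound, ?_, ?_⟩
  · rintro rfl
    push_cast at hbound
    omega
  · rintro (rfl | rfl) <;> push_cast at hbound <;> omega

/-- Counting core of Lemma 2.9: for a `(k; d₁^{f−1} d₂^1)`-graph with
`k ∈ {3, 4, 5}`, one gets `d₁(k − 2) < 2k`; hence if `k = 3` then
`3 ≤ d₁ ≤ 5`, and if `k ∈ {4, 5}` then `d₁ = 3`. -/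
theorem stmt_6 (k n m f d₁ d₂ : ℕ)
    (hk : k = 3 ∨ k = 4 ∨ k = 5) (hn : 4 ≤ n) (hd₁ : 3 ≤ d₁) (hd₂ : 3 ≤ d₂)
    (h1 : (k : ℤ) * n = 2 * (m : ℤ))
    (h2 : (f : ℤ) - 1 = (m : ℤ) - (n : ℤ) + 1)
    (h3 : 2 * (m : ℤ) = (d₁ : ℤ) * ((f : ℤ) - 1) + (d₂ : ℤ)) :
    (d₁ : ℤ) * ((k : ℤ) - 2) < 2 * (k : ℤ) ∧
      (k = 3 → 3 ≤ d₁ ∧ d₁ ≤ 5) ∧ ((k = 4 ∨ k = 5) → d₁ = 3) :=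
  stmt_6_general k n m f d₁ d₂ hd₁ h1 h2 h3
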